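/- arXiv:1701.03432 — 2 statements merged into one kernel-verified Lean document; each statement's English description precedes it below -/
import Mathlib

section
/- For k ≥ 1 define φ_k(x) := ∏_{ℓ=1}^k (1 + (x−1)/ℓ) e^{−(x−1)/ℓ} for x ≥ 0, and for every x > 0, φ_k'(x) = φ_k(x) (1 − x) Σ_{ℓ=1}^k 1/(ℓ(ℓ − 1 + x)), and moreover |φ_k'(x)| ≤ e^{1−x} |1 − x²| for all x ≥ 0 and all k ≥ 1. -/
/-!
Split off the first factor `φ₁(x) = x e^{1-x}`. Every later factor `f_ℓ` (`ℓ ≥ 2`) has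
logarithmic derivative `(1 - x)/(ℓ(ℓ - 1 + x))`, which is regular for `x > -1`; so with
`ψ = ∏_{ℓ ≥ 2} f_ℓ` and `T(x) = ∑_{ℓ ≥ 2} 1/(ℓ(ℓ - 1 + x))` one gets
`φ_k' = e^{1-x} ψ (1 - x)(1 + x T)` on `x > -1`, which is the stated formula when `x > 0`.
For `x ≥ 0` we have `0 ≤ f_ℓ ≤ 1` (from `1 + t ≤ e^t`) and
`0 ≤ T ≤ ∑_{ℓ=2}^k 1/(ℓ(ℓ-1)) = 1 - 1/k`, hence `|φ_k'| ≤ e^{1-x} |1 - x| (1 + x)`.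
-/

/-- The `k`-th partial product `φ_k(x) = ∏_{ℓ=1}^k (1 + (x-1)/ℓ) e^{-(x-1)/ℓ}` of `Φ_C`. -/
noncomputable def phiCpartial (k : ℕ) (x : ℝ) : ℝ :=
  ∏ ℓ ∈ Finset.Icc 1 k, (1 + (x - 1) / ℓ) * Real.exp (-((x - 1) / ℓ))

open Real Finset

theorem HasDerivAt.finsetProd_of_logDeriv {𝕜 ι : Type*} [NontriviallyNormedField 𝕜]
    {s : Finset ι} {f : ι → 𝕜 → 𝕜} {g : ι → 𝕜} {x : 𝕜}
    (hf : ∀ i ∈ s, HasDerivAt (f i) (f i x * g i) x) :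
    HasDerivAt (∏ i ∈ s, f i ·) ((∏ i ∈ s, f i x) * ∑ i ∈ s, g i) x := by
  classical
  refine (HasDerivAt.fun_finsetProd hf).congr_deriv ?_
  rw [mul_sum]
  refine sum_congr rfl fun i hi => ?_
  rw [smul_eq_mul, ← mul_prod_erase s (f · x) hi]
  ring

lemma one_add_mul_exp_neg_le_one (t : ℝ) : (1 + t) * exp (-t) ≤ 1 :=
  calc (1 + t) * exp (-t) ≤ exp t * exp (-t) := by gcongr; linarith [add_one_le_exp t]
    _ = 1 := by rw [← exp_add, add_neg_cancel, exp_zero]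

noncomputable def phiFactor (ℓ : ℕ) (x : ℝ) : ℝ :=
  (1 + (x - 1) / ℓ) * exp (-((x - 1) / ℓ))

lemma phiFactor_le_one (ℓ : ℕ) (x : ℝ) : phiFactor ℓ x ≤ 1 :=
  one_add_mul_exp_neg_le_one _

lemma phiFactor_nonneg (ℓ : ℕ) {x : ℝ} (hx : 0 ≤ x) : 0 ≤ phiFactor ℓ x := by
  have hℓ : (ℓ : ℝ)⁻¹ ≤ 1 := Nat.cast_inv_le_one ℓ
  have hxℓ : 0 ≤ x / ℓ := by positivity
  refine mul_nonneg ?_ (exp_pos _).le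
  rw [sub_div, one_div]
  linarith

lemma phiFactor_one : phiFactor 1 = fun x => x * exp (1 - x) := by
  funext x
  rw [phiFactor, Nat.cast_one, div_one, neg_sub]
  ring

lemma hasDerivAt_phiFactor {ℓ : ℕ} (hℓ : ℓ ≠ 0) {x : ℝ}
    (hx : (ℓ : ℝ) - 1 + x ≠ 0) :
    HasDerivAt (phiFactor ℓ) (phiFactor ℓ x * ((1 - x) / (ℓ * (ℓ - 1 + x)))) x := by
  have hℓ : (ℓ : ℝ) ≠ 0 := Nat.cast_ne_zero.2 hℓ
  have ht : HasDerivAt (fun y : ℝ => (y - 1) / ℓ) (1 / ℓ) x :=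
    ((hasDerivAt_id x).sub_const 1).div_const _
  refine ((ht.const_add 1).mul ht.fun_neg.exp).congr_deriv ?_
  rw [phiFactor]
  field_simp
  ring

lemma Icc_one_eq_insert_Icc_two {k : ℕ} (hk : 1 ≤ k) : Icc 1 k = insert 1 (Icc 2 k) :=
  (insert_Icc_succ_left_eq_Icc hk).symm

lemma phiCpartial_eq_mul_prod {k : ℕ} (hk : 1 ≤ k) (x : ℝ) :
    phiCpartial k x = x * exp (1 - x) * ∏ ℓ ∈ Icc 2 k, phiFactor ℓ x := by
  change ∏ ℓ ∈ Icc 1 k, phiFactor ℓ x = _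
  rw [Icc_one_eq_insert_Icc_two hk, prod_insert (by simp), phiFactor_one]

lemma hasDerivAt_phiCpartial {k : ℕ} (hk : 1 ≤ k) {x : ℝ} (hx : -1 < x) :
    HasDerivAt (phiCpartial k)
      (exp (1 - x) * (∏ ℓ ∈ Icc 2 k, phiFactor ℓ x) * (1 - x) *
        (1 + x * ∑ ℓ ∈ Icc 2 k, 1 / ((ℓ : ℝ) * ((ℓ : ℝ) - 1 + x)))) x := by
  have hfirst : HasDerivAt (fun y => y * exp (1 - y)) (exp (1 - x) * (1 - x)) x := by
    refine ((hasDerivAt_id x).mul ((hasDerivAt_id x).const_sub 1).exp).congr_deriv ?_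
    simp only [id]
    ring
  have htail : HasDerivAt (fun y => ∏ ℓ ∈ Icc 2 k, phiFactor ℓ y)
      ((∏ ℓ ∈ Icc 2 k, phiFactor ℓ x) *
        ∑ ℓ ∈ Icc 2 k, (1 - x) / ((ℓ : ℝ) * ((ℓ : ℝ) - 1 + x))) x := by
    refine HasDerivAt.finsetProd_of_logDeriv fun ℓ hℓ => hasDerivAt_phiFactor ?_ ?_
    · have := (mem_Icc.1 hℓ).1
      omega
    · have : (2 : ℝ) ≤ ℓ := by exact_mod_cast (mem_Icc.1 hℓ).1
      linarith
  rw [show phiCpartial k = _ from funext (phiCpartial_eq_mul_prod hk)]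
  refine (hfirst.mul htail).congr_deriv ?_
  simp only [div_eq_mul_one_div (1 - x), ← mul_sum]
  ring

lemma sum_Icc_two_one_div_mul_sub_one {k : ℕ} (hk : 1 ≤ k) :
    ∑ ℓ ∈ Icc 2 k, 1 / ((ℓ : ℝ) * ((ℓ : ℝ) - 1)) = 1 - 1 / k := by
  induction k, hk using Nat.le_induction with
  | base => simp
  | succ n hn ih =>
    rw [sum_Icc_succ_top (by omega), ih]
    have hn0 : (n : ℝ) ≠ 0 := Nat.cast_ne_zero.2 (by omega)
    push_cast
    rw [add_sub_cancel_right]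
    field_simp
    ring

lemma sum_Icc_two_one_div_le_one {k : ℕ} (hk : 1 ≤ k) {x : ℝ} (hx : 0 ≤ x) :
    ∑ ℓ ∈ Icc 2 k, 1 / ((ℓ : ℝ) * ((ℓ : ℝ) - 1 + x)) ≤ 1 :=
  calc ∑ ℓ ∈ Icc 2 k, 1 / ((ℓ : ℝ) * ((ℓ : ℝ) - 1 + x))
      ≤ ∑ ℓ ∈ Icc 2 k, 1 / ((ℓ : ℝ) * ((ℓ : ℝ) - 1)) := by
        refine sum_le_sum fun ℓ hℓ => ?_
        have : (2 : ℝ) ≤ ℓ := by exact_mod_cast (mem_Icc.1 hℓ).1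
        exact one_div_le_one_div_of_le (by nlinarith) (by nlinarith)
    _ = 1 - 1 / k := sum_Icc_two_one_div_mul_sub_one hk
    _ ≤ 1 := by simp

/-- For `k ≥ 1`: for every `x > 0`,
`φ_k'(x) = φ_k(x) (1 - x) ∑_{ℓ=1}^k 1/(ℓ(ℓ - 1 + x))`, and moreover
`|φ_k'(x)| ≤ e^{1-x} |1 - x²|` for all `x ≥ 0`. -/
theorem deriv_phiCpartial_formula (k : ℕ) (hk : 1 ≤ k) :
    (∀ x : ℝ, 0 < x →
      deriv (phiCpartial k) x
        = phiCpartial k x * (1 - x) * ∑ ℓ ∈ Finset.Icc 1 k, 1 / ((ℓ : ℝ) * ((ℓ : ℝ) - 1 + x))) ∧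
    (∀ x : ℝ, 0 ≤ x → |deriv (phiCpartial k) x| ≤ Real.exp (1 - x) * |1 - x ^ 2|) := by
  refine ⟨fun x hx => ?_, fun x hx => ?_⟩
  · rw [(hasDerivAt_phiCpartial hk (by linarith)).deriv, phiCpartial_eq_mul_prod hk,
      Icc_one_eq_insert_Icc_two hk, sum_insert (by simp)]
    field_simp
    ring
  · rw [(hasDerivAt_phiCpartial hk (by linarith)).deriv]
    set P := ∏ ℓ ∈ Icc 2 k, phiFactor ℓ x
    set T := ∑ ℓ ∈ Icc 2 k, 1 / ((ℓ : ℝ) * ((ℓ : ℝ) - 1 + x))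
    have hP0 : 0 ≤ P := prod_nonneg fun ℓ _ => phiFactor_nonneg ℓ hx
    have hP1 : P ≤ 1 :=
      prod_le_one (fun ℓ _ => phiFactor_nonneg ℓ hx) fun ℓ _ => phiFactor_le_one ℓ x
    have hT0 : 0 ≤ T := sum_nonneg fun ℓ hℓ => by
      have : (2 : ℝ) ≤ ℓ := by exact_mod_cast (mem_Icc.1 hℓ).1
      exact one_div_nonneg.2 (mul_nonneg (by linarith) (by linarith))
    have hT1 : T ≤ 1 := sum_Icc_two_one_div_le_one hk hx
    calc |exp (1 - x) * P * (1 - x) * (1 + x * T)|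
        = exp (1 - x) * P * |1 - x| * (1 + x * T) := by
          rw [abs_mul, abs_mul, abs_mul, abs_of_pos (exp_pos _), abs_of_nonneg hP0,
            abs_of_nonneg (by positivity : 0 ≤ 1 + x * T)]
      _ ≤ exp (1 - x) * 1 * |1 - x| * (1 + x) := by gcongr; nlinarith
      _ = exp (1 - x) * |1 - x ^ 2| := by
          rw [show (1 : ℝ) - x ^ 2 = (1 - x) * (1 + x) by ring, abs_mul,
            abs_of_nonneg (by linarith : (0 : ℝ) ≤ 1 + x)]
          ring
end

section
/- Define Φ_C(x) := ∏_{ℓ=1}^∞ (1 + (x−1)/ℓ) e^{−(x−1)/ℓ} and φ_k(x) := ∏_{ℓ=1}^k (1 + (x−1)/ℓ) e^{−(x−1)/ℓ} for x ≥ 0. Set C₀ := ∫_0^1 u/(1 − u/2) du (a finite positive constant). Then for every k ≥ 1 and every x ∈ [0,1], 0 ≤ φ_k(x) − Φ_C(x) ≤ C₀/k; in particular sup_{x ∈ [0,1]} |φ_k(x) − Φ_C(x)| = O(1/k) as k → ∞. -/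
/-- The infinite product `Φ_C(x) = ∏_{ℓ=1}^∞ (1 + (x-1)/ℓ) e^{-(x-1)/ℓ}`. -/
noncomputable def PhiC (x : ℝ) : ℝ :=
  ∏' ℓ : ℕ, (1 + (x - 1) / ((ℓ : ℝ) + 1)) * Real.exp (-((x - 1) / ((ℓ : ℝ) + 1)))

open Finset Real

lemma Finset.one_sub_sum_one_sub_le_prod {ι : Type*} {f : ι → ℝ} (h0 : ∀ i, 0 ≤ f i)
    (h1 : ∀ i, f i ≤ 1) (s : Finset ι) : 1 - ∑ i ∈ s, (1 - f i) ≤ ∏ i ∈ s, f i := by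
  induction s using Finset.cons_induction with
  | empty => simp
  | cons j s _ ih =>
    rw [prod_cons, sum_cons]
    have hsum : 0 ≤ ∑ i ∈ s, (1 - f i) := sum_nonneg fun i _ => sub_nonneg.2 (h1 i)
    have hprod : 0 ≤ ∏ i ∈ s, f i := prod_nonneg fun i _ => h0 i
    nlinarith [h0 j, h1 j, mul_le_mul_of_nonneg_left ih (h0 j)]

lemma Nat.sum_one_div_mul_add_one_le {k : ℕ} (hk : 1 ≤ k) {s : Finset ℕ} (hs : ∀ i ∈ s, k ≤ i) :
    ∑ i ∈ s, 1 / ((i : ℝ) * (i + 1)) ≤ 1 / k := by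
  obtain ⟨N, hkN, hsN⟩ : ∃ N, k ≤ N ∧ s ⊆ Ico k N :=
    ⟨max k (s.sup id + 1), le_max_left _ _, fun i hi => mem_Ico.2
      ⟨hs i hi, lt_max_of_lt_right (Nat.lt_add_one_iff.2 (le_sup (f := id) hi))⟩⟩
  have htelescope : ∀ i ∈ Ico k N,
      1 / ((i : ℝ) * (i + 1)) = -1 / ((i + 1 : ℕ) : ℝ) - -1 / (i : ℝ) := by
    intro i hi
    have : (0 : ℝ) < i := Nat.cast_pos.2 (by have := (mem_Ico.1 hi).1; omega)
    push_cast
    field_simp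
    ring
  calc ∑ i ∈ s, 1 / ((i : ℝ) * (i + 1)) ≤ ∑ i ∈ Ico k N, 1 / ((i : ℝ) * (i + 1)) :=
        sum_le_sum_of_subset_of_nonneg hsN fun i _ _ => by positivity
    _ = 1 / k - 1 / N := by
        rw [sum_congr rfl htelescope, sum_Ico_sub (fun i : ℕ => -1 / (i : ℝ)) hkN]
        ring
    _ ≤ 1 / k := sub_le_self _ (by positivity)

section UnitIntervalProducts

variable {ι : Type*} {f : ι → ℝ}

theorem hasProd_iInf_of_mem_Icc (h0 : ∀ i, 0 ≤ f i) (h1 : ∀ i, f i ≤ 1) :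
    HasProd f (⨅ s : Finset ι, ∏ i ∈ s, f i) :=
  tendsto_atTop_ciInf (prod_anti_set_of_le_one h0 h1)
    ⟨0, by rintro _ ⟨s, rfl⟩; exact prod_nonneg fun i _ => h0 i⟩

theorem tprod_le_prod_of_mem_Icc (h0 : ∀ i, 0 ≤ f i) (h1 : ∀ i, f i ≤ 1) (s : Finset ι) :
    ∏' i, f i ≤ ∏ i ∈ s, f i := by
  rw [(hasProd_iInf_of_mem_Icc h0 h1).tprod_eq]
  exact ciInf_le ⟨0, by rintro _ ⟨s, rfl⟩; exact prod_nonneg fun i _ => h0 i⟩ s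

theorem prod_mul_one_sub_le_tprod_of_mem_Icc [DecidableEq ι] (h0 : ∀ i, 0 ≤ f i)
    (h1 : ∀ i, f i ≤ 1) {s : Finset ι} {c : ℝ}
    (hc : ∀ t, Disjoint s t → ∑ i ∈ t, (1 - f i) ≤ c) :
    (∏ i ∈ s, f i) * (1 - c) ≤ ∏' i, f i := by
  rw [(hasProd_iInf_of_mem_Icc h0 h1).tprod_eq]
  refine le_ciInf fun t => ?_
  have htail : 1 - c ≤ ∏ i ∈ t \ s, f i :=
    (sub_le_sub_left (hc _ disjoint_sdiff) 1).trans (one_sub_sum_one_sub_le_prod h0 h1 _)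
  calc (∏ i ∈ s, f i) * (1 - c) ≤ (∏ i ∈ s, f i) * ∏ i ∈ t \ s, f i :=
        mul_le_mul_of_nonneg_left htail (prod_nonneg fun i _ => h0 i)
    _ = ∏ i ∈ s ∪ t, f i := by rw [← prod_union disjoint_sdiff, union_sdiff_self_eq_union]
    _ ≤ ∏ i ∈ t, f i := prod_anti_set_of_le_one h0 h1 subset_union_right

end UnitIntervalProducts

noncomputable def weierstrassFactor (u : ℝ) : ℝ := (1 - u) * exp u

lemma weierstrassFactor_le_one (u : ℝ) : weierstrassFactor u ≤ 1 := by
  calc (1 - u) * exp u ≤ exp (-u) * exp u := by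
        gcongr; linarith [add_one_le_exp (-u)]
    _ = 1 := by rw [← exp_add, neg_add_cancel, exp_zero]

lemma weierstrassFactor_nonneg {u : ℝ} (hu : u ≤ 1) : 0 ≤ weierstrassFactor u :=
  mul_nonneg (sub_nonneg.2 hu) (exp_pos u).le

lemma one_sub_weierstrassFactor_le {u : ℝ} (hu0 : 0 ≤ u) (hu1 : u < 1) :
    1 - weierstrassFactor u ≤ u ^ 2 / (2 * (1 - u)) := by
  rw [le_div_iff₀ (by linarith), weierstrassFactor]
  nlinarith [mul_le_mul_of_nonneg_left (quadratic_le_exp_of_nonneg hu0) (sq_nonneg (1 - u)),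
    pow_nonneg hu0 4]

lemma one_sub_weierstrassFactor_div_le {t : ℝ} (ht0 : 0 ≤ t) (ht1 : t ≤ 1) {n : ℕ}
    (hn : 1 ≤ n) : 1 - weierstrassFactor (t / (n + 1)) ≤ 1 / ((n : ℝ) * (n + 1)) / 2 := by
  have hn' : (1 : ℝ) ≤ n := by exact_mod_cast hn
  have hu1 : t / (n + 1) < 1 := by rw [div_lt_one (by positivity)]; linarith
  have hrw : (t / (n + 1)) ^ 2 / (2 * (1 - t / (n + 1))) =
      t ^ 2 / ((n + 1) * (n + 1 - t)) / 2 := by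
    have : (n : ℝ) + 1 - t ≠ 0 := by linarith
    field_simp
  calc 1 - weierstrassFactor (t / (n + 1)) ≤ (t / (n + 1)) ^ 2 / (2 * (1 - t / (n + 1))) :=
        one_sub_weierstrassFactor_le (by positivity) hu1
    _ = t ^ 2 / ((n + 1) * (n + 1 - t)) / 2 := hrw
    _ ≤ 1 / ((n : ℝ) * (n + 1)) / 2 := by
        gcongr ?_ / 2
        exact div_le_div₀ zero_le_one (by nlinarith) (by positivity) (by nlinarith)

lemma sum_one_sub_weierstrassFactor_div_le {t : ℝ} (ht0 : 0 ≤ t) (ht1 : t ≤ 1) {k : ℕ}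
    (hk : 1 ≤ k) {s : Finset ℕ} (hs : Disjoint (range k) s) :
    ∑ i ∈ s, (1 - weierstrassFactor (t / (i + 1))) ≤ 1 / (2 * k) := by
  have hks : ∀ i ∈ s, k ≤ i := fun i hi =>
    not_lt.1 fun h => disjoint_left.1 hs (mem_range.2 h) hi
  calc ∑ i ∈ s, (1 - weierstrassFactor (t / (i + 1)))
      ≤ ∑ i ∈ s, 1 / ((i : ℝ) * (i + 1)) / 2 :=
        sum_le_sum fun i hi => one_sub_weierstrassFactor_div_le ht0 ht1 (hk.trans (hks i hi))
    _ ≤ 1 / k / 2 := by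
        rw [← sum_div]
        gcongr
        exact Nat.sum_one_div_mul_add_one_le hk hks
    _ = 1 / (2 * k) := by rw [div_div, mul_comm]

lemma phiCpartial_eq_prod_range (k : ℕ) (x : ℝ) :
    phiCpartial k x = ∏ i ∈ range k, weierstrassFactor ((1 - x) / (i + 1)) := by
  rw [phiCpartial, ← Ico_add_one_right_eq_Icc, prod_Ico_eq_prod_range, add_tsub_cancel_right]
  refine prod_congr rfl fun i _ => ?_
  rw [weierstrassFactor]
  push_cast
  ring_nf

lemma PhiC_eq_tprod (x : ℝ) : PhiC x = ∏' i : ℕ, weierstrassFactor ((1 - x) / (i + 1)) := by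
  rw [PhiC]
  congr! 2 with i
  rw [weierstrassFactor]
  ring_nf

lemma one_div_two_le_integral_div_one_sub_div_two :
    (1 : ℝ) / 2 ≤ ∫ u in (0 : ℝ)..1, u / (1 - u / 2) := by
  calc (1 : ℝ) / 2 = ∫ u in (0 : ℝ)..1, u := by norm_num [integral_id]
    _ ≤ ∫ u in (0 : ℝ)..1, u / (1 - u / 2) := by
      refine intervalIntegral.integral_mono_on zero_le_one intervalIntegral.intervalIntegrable_id
        ?_ fun u hu => ?_
      · refine ContinuousOn.intervalIntegrable_of_Icc zero_le_one ?_
        exact continuousOn_id.div (by fun_prop) fun u hu => by linarith [hu.2]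
      · rw [le_div_iff₀ (by linarith [hu.2])]
        nlinarith [hu.1]

/-- With `C₀ := ∫_0^1 u/(1 - u/2) du`, for every `k ≥ 1` and every `x ∈ [0,1]` one has
`0 ≤ φ_k(x) - Φ_C(x) ≤ C₀/k`; in particular `sup_{[0,1]} |φ_k - Φ_C| = O(1/k)`. -/
theorem phiCpartial_sub_PhiC_on_unit_interval (k : ℕ) (hk : 1 ≤ k)
    (x : ℝ) (hx : x ∈ Set.Icc (0 : ℝ) 1) :
    0 ≤ phiCpartial k x - PhiC x ∧
      phiCpartial k x - PhiC x ≤ (∫ u in (0 : ℝ)..1, u / (1 - u / 2)) / k := by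
  obtain ⟨hx0, hx1⟩ := hx
  have ht0 : 0 ≤ 1 - x := by linarith
  have ht1 : 1 - x ≤ 1 := by linarith
  have ha0 (i : ℕ) : 0 ≤ weierstrassFactor ((1 - x) / (i + 1)) :=
    weierstrassFactor_nonneg (div_le_one_of_le₀ (by linarith [i.cast_nonneg (α := ℝ)])
      (by positivity))
  have ha1 (i : ℕ) : weierstrassFactor ((1 - x) / (i + 1)) ≤ 1 := weierstrassFactor_le_one _
  have hlower := prod_mul_one_sub_le_tprod_of_mem_Icc ha0 ha1 (s := range k)
    fun s hs => sum_one_sub_weierstrassFactor_div_le ht0 ht1 hk hs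
  have hφ1 : ∏ i ∈ range k, weierstrassFactor ((1 - x) / (i + 1)) ≤ 1 :=
    prod_le_one (fun i _ => ha0 i) fun i _ => ha1 i
  rw [phiCpartial_eq_prod_range, PhiC_eq_tprod]
  refine ⟨sub_nonneg.2 (tprod_le_prod_of_mem_Icc ha0 ha1 _), ?_⟩
  rw [mul_one_sub] at hlower
  calc _ ≤ (∏ i ∈ range k, weierstrassFactor ((1 - x) / (i + 1))) * (1 / (2 * k)) := by
        linarith
    _ ≤ 1 / (2 * k) := mul_le_of_le_one_left (by positivity) hφ1
    _ = (1 / 2) / k := by ring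
    _ ≤ (∫ u in (0 : ℝ)..1, u / (1 - u / 2)) / k := by
        gcongr
        exact one_div_two_le_integral_div_one_sub_div_two
end
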